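/- arXiv:1105.0240 — 4 statements merged into one kernel-verified Lean document; each statement's English description precedes it below -/
import Mathlib

section
/- For N ≥ 1 and integers 0 ≤ θ ≤ m1, the N-fold product of the set Z = {(z1,z2) ∈ [0,m1]×[0,m2] : θ−1 ≤ z1+z2 ≤ θ} is a fooling set for the componentwise sum-threshold function Π_θ^N on ({0,…,m1}^N) × ({0,…,m2}^N): for any distinct (ā1,b̄1),(ā2,b̄2) in Z^N with Π_θ^N(ā1,b̄1) = Π_θ^N(ā2,b̄2), one of the crossed evaluations Π_θ^N(ā2,b̄1), Π_θ^N(ā1,b̄2) differs from Π_θ^N(ā1,b̄1). -/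
/-- The N-fold product of the band Z is a fooling set for the componentwise
sum-threshold function Π_θ^N. -/
theorem stmt_10 (N : ℕ) (hN : 1 ≤ N) (m1 m2 θ : ℤ) (hθ0 : 0 ≤ θ) (hθ : θ ≤ m1)
    (hm : m1 ≤ m2) :
    ∀ a1 b1 a2 b2 : Fin N → ℤ,
      (∀ i, 0 ≤ a1 i ∧ a1 i ≤ m1 ∧ 0 ≤ b1 i ∧ b1 i ≤ m2 ∧
        θ - 1 ≤ a1 i + b1 i ∧ a1 i + b1 i ≤ θ) →
      (∀ i, 0 ≤ a2 i ∧ a2 i ≤ m1 ∧ 0 ≤ b2 i ∧ b2 i ≤ m2 ∧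
        θ - 1 ≤ a2 i + b2 i ∧ a2 i + b2 i ≤ θ) →
      (a1, b1) ≠ (a2, b2) →
      (fun i => if θ ≤ a1 i + b1 i then (1:ℕ) else 0)
        = (fun i => if θ ≤ a2 i + b2 i then (1:ℕ) else 0) →
      ((fun i => if θ ≤ a2 i + b1 i then (1:ℕ) else 0)
          ≠ (fun i => if θ ≤ a1 i + b1 i then (1:ℕ) else 0) ∨
       (fun i => if θ ≤ a1 i + b2 i then (1:ℕ) else 0)
          ≠ (fun i => if θ ≤ a1 i + b1 i then (1:ℕ) else 0)) := by
  intro a1 b1 a2 b2 h1 h2 hne heq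
  have hsum : ∀ i, a1 i + b1 i = a2 i + b2 i := by
    intro i
    have hi := congrFun heq i
    have h1i := h1 i; have h2i := h2 i
    by_cases h : θ ≤ a1 i + b1 i <;> by_cases h' : θ ≤ a2 i + b2 i <;>
      simp [h, h'] at hi <;> omega
  obtain ⟨i, hi⟩ : ∃ i, a1 i ≠ a2 i := by
    by_contra hc
    push_neg at hc
    apply hne
    have ha : a1 = a2 := funext hc
    have hb : b1 = b2 := funext fun i => by have := hsum i; have := hc i; omega
    rw [ha, hb]
  have key := hsum i
  have h1i := h1 i; have h2i := h2 i
  rcases lt_or_gt_of_ne hi with hlt | hgt <;> by_cases hs : θ ≤ a1 i + b1 i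
  · -- a1 i < a2 i, sum = θ : a1 i + b2 i < θ
    right
    exact Function.ne_iff.mpr ⟨i, by split_ifs <;> omega⟩
  · -- a1 i < a2 i, sum = θ-1 : a2 i + b1 i ≥ θ
    left
    exact Function.ne_iff.mpr ⟨i, by split_ifs <;> omega⟩
  · -- a1 i > a2 i, sum = θ : a2 i + b1 i < θ
    left
    exact Function.ne_iff.mpr ⟨i, by split_ifs <;> omega⟩
  · -- a1 i > a2 i, sum = θ-1 : a1 i + b2 i ≥ θ
    right
    exact Function.ne_iff.mpr ⟨i, by split_ifs <;> omega⟩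
end

section
/- Let a ≤ b ≤ m1 ≤ m2 be nonnegative integers, and define the sum-interval function Π_{[a,b]}(x1,x2) = 1 if a ≤ x1+x2 ≤ b, else 0, on {0,…,m1}×{0,…,m2}. Let Z be the union of the set of pairs (z1,z2) in the box with z1+z2 = b, together with any set of b−a+2 pairs with z1+z2 = b+1 whose first coordinates are consecutive integers. Then Z is a fooling set for Π_{[a,b]}, and |Z| = 2b − a + 3 when b ≤ m1. -/
/-- For the sum-interval function Π_{[a,b]}, the line `z1+z2 = b` in the box
together with b−a+2 consecutive points on the line `z1+z2 = b+1` forms a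
fooling set of size 2b−a+3 (when b ≤ m1 ≤ m2). -/
theorem stmt_12 (a b m1 m2 c : ℤ) (ha0 : 0 ≤ a) (hab : a ≤ b) (hbm : b ≤ m1)
    (hm : m1 ≤ m2) (hc0 : 0 ≤ c)
    (hbox : ∀ z1 : ℤ, c ≤ z1 → z1 ≤ c + (b - a + 1) →
      0 ≤ z1 ∧ z1 ≤ m1 ∧ 0 ≤ b + 1 - z1 ∧ b + 1 - z1 ≤ m2) :
    (∀ za ∈ (((Finset.Icc (0:ℤ) m1) ×ˢ (Finset.Icc (0:ℤ) m2)).filter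
          (fun z => z.1 + z.2 = b)) ∪
        (((Finset.Icc (0:ℤ) m1) ×ˢ (Finset.Icc (0:ℤ) m2)).filter
          (fun z => z.1 + z.2 = b + 1 ∧ c ≤ z.1 ∧ z.1 ≤ c + (b - a + 1))),
     ∀ zb ∈ (((Finset.Icc (0:ℤ) m1) ×ˢ (Finset.Icc (0:ℤ) m2)).filter
          (fun z => z.1 + z.2 = b)) ∪
        (((Finset.Icc (0:ℤ) m1) ×ˢ (Finset.Icc (0:ℤ) m2)).filter
          (fun z => z.1 + z.2 = b + 1 ∧ c ≤ z.1 ∧ z.1 ≤ c + (b - a + 1))),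
      za ≠ zb →
      (if a ≤ za.1 + za.2 ∧ za.1 + za.2 ≤ b then (1:ℕ) else 0)
        = (if a ≤ zb.1 + zb.2 ∧ zb.1 + zb.2 ≤ b then (1:ℕ) else 0) →
      ((if a ≤ zb.1 + za.2 ∧ zb.1 + za.2 ≤ b then (1:ℕ) else 0)
          ≠ (if a ≤ za.1 + za.2 ∧ za.1 + za.2 ≤ b then (1:ℕ) else 0) ∨
       (if a ≤ za.1 + zb.2 ∧ za.1 + zb.2 ≤ b then (1:ℕ) else 0)
          ≠ (if a ≤ za.1 + za.2 ∧ za.1 + za.2 ≤ b then (1:ℕ) else 0))) ∧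
    (((((Finset.Icc (0:ℤ) m1) ×ˢ (Finset.Icc (0:ℤ) m2)).filter
          (fun z => z.1 + z.2 = b)) ∪
        (((Finset.Icc (0:ℤ) m1) ×ˢ (Finset.Icc (0:ℤ) m2)).filter
          (fun z => z.1 + z.2 = b + 1 ∧ c ≤ z.1 ∧ z.1 ≤ c + (b - a + 1)))).card : ℤ)
      = 2 * b - a + 3 := by

  constructor
  · intro za hza zb hzb hne hval
    simp only [Finset.mem_union, Finset.mem_filter, Finset.mem_product,
      Finset.mem_Icc] at hza hzb
    have hne1 : za.1 ≠ zb.1 ∨ za.2 ≠ zb.2 := by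
      by_contra h
      push_neg at h
      exact hne (Prod.ext h.1 h.2)
    rcases hza with ⟨_, hsa⟩ | ⟨_, hsa, hca1, hca2⟩ <;>
      rcases hzb with ⟨_, hsb⟩ | ⟨_, hsb, hcb1, hcb2⟩
    · rcases lt_trichotomy za.1 zb.1 with h | h | h
      · left; split_ifs <;> omega
      · omega
      · right; split_ifs <;> omega
    · exfalso; split_ifs at hval <;> omega
    · exfalso; split_ifs at hval <;> omega
    · rcases lt_trichotomy za.1 zb.1 with h | h | h
      · right; split_ifs <;> omega
      · omega
      · left; split_ifs <;> omega
  · rw [Finset.card_union_of_disjoint]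
    · have h1 : (((Finset.Icc (0:ℤ) m1) ×ˢ (Finset.Icc (0:ℤ) m2)).filter
          (fun z => z.1 + z.2 = b))
          = (Finset.Icc (0:ℤ) b).image (fun z1 => (z1, b - z1)) := by
        ext ⟨x, y⟩
        simp only [Finset.mem_filter, Finset.mem_product, Finset.mem_Icc,
          Finset.mem_image, Prod.mk.injEq]
        constructor
        · rintro ⟨⟨⟨h1, h2⟩, h3, h4⟩, h5⟩
          exact ⟨x, by omega, rfl, by omega⟩
        · rintro ⟨z, hz, rfl, rfl⟩
          omega
      have h2 : (((Finset.Icc (0:ℤ) m1) ×ˢ (Finset.Icc (0:ℤ) m2)).filter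
          (fun z => z.1 + z.2 = b + 1 ∧ c ≤ z.1 ∧ z.1 ≤ c + (b - a + 1)))
          = (Finset.Icc c (c + (b - a + 1))).image (fun z1 => (z1, b + 1 - z1)) := by
        ext ⟨x, y⟩
        simp only [Finset.mem_filter, Finset.mem_product, Finset.mem_Icc,
          Finset.mem_image, Prod.mk.injEq]
        constructor
        · rintro ⟨_, h5, h6, h7⟩
          exact ⟨x, ⟨h6, h7⟩, rfl, by omega⟩
        · rintro ⟨z, hz, rfl, rfl⟩
          have := hbox z hz.1 hz.2
          omega
      have hinj1 : Function.Injective (fun z1 : ℤ => (z1, b - z1)) := by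
        intro x y h; simpa using (Prod.mk.injEq _ _ _ _ ▸ h).1
      have hinj2 : Function.Injective (fun z1 : ℤ => (z1, b + 1 - z1)) := by
        intro x y h; simpa using (Prod.mk.injEq _ _ _ _ ▸ h).1
      rw [h1, h2, Finset.card_image_of_injective _ hinj1,
        Finset.card_image_of_injective _ hinj2, Int.card_Icc, Int.card_Icc]
      push_cast
      rw [Int.toNat_of_nonneg (by omega), Int.toNat_of_nonneg (by omega)]
      ring
    · rw [Finset.disjoint_left]
      rintro ⟨x, y⟩ hx hy
      simp only [Finset.mem_filter] at hx hy
      omega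
end

section
/- Let w : {0,1,…,θ}^N → ℕ count coordinates strictly less than θ. If l : {0,…,θ}^N → ℕ is any function satisfying the Kraft inequality ∑_x 2^{−l(x)} ≤ 1, then max_x (l(x) + w(x)) ≥ N·log₂(2θ+1). -/
/-- Converse for sum-threshold: any Kraft length function l satisfies
`max_x (l(x) + w_{<θ}(x)) ≥ N log₂(2θ+1)`. -/
theorem stmt_16 (θ N : ℕ) (l : (Fin N → Fin (θ + 1)) → ℕ)
    (hkraft : ∑ x : Fin N → Fin (θ + 1), ((1 : ℝ) / 2) ^ (l x) ≤ 1) :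
    (N : ℝ) * Real.logb 2 (2 * θ + 1) ≤
      ((Finset.univ.sup (fun x : Fin N → Fin (θ + 1) =>
        l x + (Finset.univ.filter (fun i => (x i : ℕ) < θ)).card) : ℕ) : ℝ) := by
  set w : (Fin N → Fin (θ + 1)) → ℕ := fun x =>
    (Finset.univ.filter (fun i => (x i : ℕ) < θ)).card with hw
  set L : ℕ := Finset.univ.sup (fun x => l x + w x) with hL
  have key : ((2 * θ + 1 : ℕ) : ℝ) ^ N ≤ 2 ^ L := by
    have h1 : ((2 * θ + 1 : ℕ) : ℝ) ^ N = ∑ x : Fin N → Fin (θ + 1), (2 : ℝ) ^ (w x) := by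
      have := Fintype.sum_pow (fun a : Fin (θ + 1) => if (a : ℕ) < θ then (2 : ℝ) else 1) N
      rw [show (∑ a : Fin (θ + 1), if (a : ℕ) < θ then (2 : ℝ) else 1) = ((2 * θ + 1 : ℕ) : ℝ) by
        rw [Finset.sum_ite, Finset.sum_const, Finset.sum_const]
        have hc : (Finset.univ.filter (fun a : Fin (θ + 1) => (a : ℕ) < θ)) = Finset.Iio (Fin.last θ) := by
          ext a; simp only [Finset.mem_filter, Finset.mem_Iio, Finset.mem_univ, true_and, Fin.lt_def, Fin.val_last]
        rw [hc, Fin.card_Iio]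
        have hc2 : (Finset.univ.filter (fun a : Fin (θ + 1) => ¬ (a : ℕ) < θ)).card = 1 := by
          rw [Finset.filter_not, Finset.card_sdiff_of_subset (Finset.filter_subset _ _), hc, Fin.card_Iio]
          simp
        rw [hc2]
        push_cast
        ring] at this
      rw [this]
      refine Finset.sum_congr rfl fun x _ => ?_
      simp [hw, Finset.prod_ite, Finset.prod_const]
    rw [h1]
    calc ∑ x : Fin N → Fin (θ + 1), (2 : ℝ) ^ (w x)
        ≤ ∑ x : Fin N → Fin (θ + 1), 2 ^ L * ((1 : ℝ) / 2) ^ (l x) := by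
          refine Finset.sum_le_sum fun x _ => ?_
          have hx : l x + w x ≤ L := Finset.le_sup (f := fun x => l x + w x) (Finset.mem_univ x)
          rw [one_div, inv_pow, ← div_eq_mul_inv, le_div_iff₀ (by positivity), ← pow_add]
          exact pow_le_pow_right₀ (by norm_num) (by omega)
      _ ≤ 2 ^ L * 1 := by rw [← Finset.mul_sum]; exact mul_le_mul_of_nonneg_left hkraft (by positivity)
      _ = 2 ^ L := mul_one _
  have h2 : (2 * (θ : ℝ) + 1) = ((2 * θ + 1 : ℕ) : ℝ) := by push_cast; ring
  have hpos : (0:ℝ) < ((2 * θ + 1 : ℕ) : ℝ) ^ N := by positivity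
  have hlog := Real.logb_le_logb_of_le (b := 2) (by norm_num) hpos key
  rw [Real.logb_pow, Real.logb_pow, Real.logb_self_eq_one (by norm_num)] at hlog
  rw [h2]
  simpa using hlog
end

section
/- If l : {0,1}^N → ℕ satisfies ∑_{x ∈ {0,1}^N} 2^{−l(x)} ≤ 1, then max_{x ∈ {0,1}^N} (l(x) + w(x)) ≥ N·log₂ 3, where w(x) is the Hamming weight of x. -/
open Finset

lemma sum_two_pow_weight (N : ℕ) :
    ∑ x : Fin N → Bool, (2 : ℝ) ^ (univ.filter (fun i => x i = true)).card = 3 ^ N := by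
  have h : ∏ i : Fin N, (∑ b : Bool, (if b = true then (2:ℝ) else 1))
      = ∑ x : Fin N → Bool, ∏ i : Fin N, (if x i = true then (2:ℝ) else 1) :=
    Fintype.prod_sum (fun _ b => if b = true then (2:ℝ) else 1)
  have h2 : ∀ x : Fin N → Bool,
      ∏ i : Fin N, (if x i = true then (2:ℝ) else 1)
        = (2:ℝ) ^ (univ.filter (fun i => x i = true)).card := by
    intro x
    simp [Finset.prod_ite, Finset.prod_const]
  calc ∑ x : Fin N → Bool, (2 : ℝ) ^ (univ.filter (fun i => x i = true)).card
      = ∑ x : Fin N → Bool, ∏ i : Fin N, (if x i = true then (2:ℝ) else 1) := by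
        simp_rw [h2]
    _ = ∏ i : Fin N, (∑ b : Bool, (if b = true then (2:ℝ) else 1)) := h.symm
    _ = 3 ^ N := by norm_num

/-- Converse for AND: any Kraft length function l satisfies
`max_x (l(x) + w(x)) ≥ N log₂ 3`. -/
theorem stmt_17 (N : ℕ) (l : (Fin N → Bool) → ℕ)
    (hkraft : ∑ x : Fin N → Bool, ((1 : ℝ) / 2) ^ (l x) ≤ 1) :
    (N : ℝ) * Real.logb 2 3 ≤
      ((Finset.univ.sup (fun x : Fin N → Bool =>
        l x + (Finset.univ.filter (fun i => x i = true)).card) : ℕ) : ℝ) := by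
  set w : (Fin N → Bool) → ℕ := fun x => (univ.filter (fun i => x i = true)).card with hw
  set M : ℕ := Finset.univ.sup (fun x => l x + w x) with hM
  have hle : ∀ x : Fin N → Bool, l x + w x ≤ M := fun x =>
    Finset.le_sup (f := fun x => l x + w x) (Finset.mem_univ x)
  have key : (3 : ℝ) ^ N ≤ 2 ^ M := by
    have h1 : ∀ x : Fin N → Bool, (2:ℝ) ^ (w x) / 2 ^ M ≤ ((1:ℝ)/2) ^ (l x) := by
      intro x
      have hlx : l x ≤ M - w x := Nat.le_sub_of_add_le (hle x)
      have hwx : w x ≤ M := le_trans (Nat.le_add_left _ _) (hle x)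
      have : ((1:ℝ)/2) ^ (M - w x) ≤ ((1:ℝ)/2) ^ (l x) :=
        pow_le_pow_of_le_one (by norm_num) (by norm_num) hlx
      refine le_trans (le_of_eq ?_) this
      rw [div_pow, one_pow, div_eq_div_iff (by positivity) (by positivity), one_mul,
        ← pow_add]
      congr 1
      omega
    have h2 : ∑ x : Fin N → Bool, (2:ℝ) ^ (w x) / 2 ^ M ≤ 1 :=
      le_trans (Finset.sum_le_sum fun x _ => h1 x) hkraft
    rw [← Finset.sum_div, sum_two_pow_weight, div_le_one (by positivity)] at h2
    exact h2
  have hlog := Real.logb_le_logb_of_le (b := 2) (by norm_num) (by positivity) key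
  simpa [Real.logb_pow, Real.logb_self_eq_one] using hlog
end
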